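/- For any prime p and natural numbers m, n, the Bell numbers satisfy the Touchard congruence B_{p^m + n} ≡ m·B_n + B_{n+1} (mod p). -/

import Mathlib

/-- Stirling numbers of the second kind. -/
def stirling2 : ℕ → ℕ → ℕ
  | 0, 0 => 1
  | 0, _ + 1 => 0
  | _ + 1, 0 => 0
  | n + 1, k + 1 => (k + 1) * stirling2 n (k + 1) + stirling2 n k

/-- The Bell numbers: the number of partitions of an `n`-element set. -/
def bell (n : ℕ) : ℕ := ∑ k ∈ Finset.range (n + 1), stirling2 n k

/-!
Let `L : R[X] → R` be the linear functional `X ^ n ↦ B_n`. The Bell recurrence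
`B_{n+1} = ∑ᵢ C(n, i) B_i` says `L (X * f) = L (f (X + 1))`, and iterating it along the falling
factorial gives `L ((X)ₖ * g) = L (g (X + k))`. In characteristic `p` we have `(X)ₚ = X ^ p - X`
and `g (X + p) = g`, so `L` kills the ideal generated by `X ^ p - X - 1`; this is Touchard's
`B_{n+p} = B_n + B_{n+1}`. By Frobenius, `X ^ p - X - 1` divides `X ^ p ^ m - X - m`, and applying
`L` to `(X ^ p ^ m - X - m) * X ^ n` gives the congruence.
-/

open Finset Polynomial

theorem stirling2_eq_stirlingSecond : stirling2 = Nat.stirlingSecond := by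
  ext n k
  induction n generalizing k with
  | zero => cases k <;> rfl
  | succ n ih => cases k <;> simp [stirling2, Nat.stirlingSecond, ih]

theorem Nat.stirlingSecond_succ_succ_eq_sum_choose (n k : ℕ) :
    stirlingSecond (n + 1) (k + 1) = ∑ i ∈ range (n + 1), n.choose i * stirlingSecond i k := by
  induction n generalizing k with
  | zero => cases k <;> rfl
  | succ n ih =>
    have pascal := sum_choose_succ_mul (R := ℕ) (fun i _ => stirlingSecond i k) n
    simp only [Nat.cast_id] at pascal
    rw [pascal, ← ih]
    cases k with
    | zero => simp [stirlingSecond_one_right]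
    | succ k =>
      simp only [stirlingSecond_succ_succ, mul_add, sum_add_distrib, mul_left_comm _ (k + 1),
        ← mul_sum, ← ih]
      ring

theorem bell_eq_sum_range {n N : ℕ} (h : n < N) :
    bell n = ∑ k ∈ range N, Nat.stirlingSecond n k := by
  rw [bell, stirling2_eq_stirlingSecond]
  exact sum_subset (range_subset_range.2 h) fun k _ hk =>
    Nat.stirlingSecond_eq_zero_of_lt (by simpa using hk)

theorem bell_succ (n : ℕ) : bell (n + 1) = ∑ i ∈ range (n + 1), n.choose i * bell i := by
  rw [bell_eq_sum_range (Nat.lt_succ_self _), sum_range_succ', Nat.stirlingSecond_succ_zero,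
    add_zero]
  simp only [Nat.stirlingSecond_succ_succ_eq_sum_choose]
  rw [sum_comm]
  refine sum_congr rfl fun i hi => ?_
  rw [← mul_sum, bell_eq_sum_range (mem_range.1 hi)]

section BellFunctional

variable (R : Type*) [CommSemiring R]

noncomputable def bellFunctional : R[X] →ₗ[R] R :=
  lsum fun n => (bell n : R) • LinearMap.id

variable {R}

theorem bellFunctional_X_pow (n : ℕ) : bellFunctional R (X ^ n) = bell n := by
  simp [bellFunctional, ← monomial_one_right_eq_X_pow, sum_monomial_index]

theorem bellFunctional_C_mul (a : R) (f : R[X]) :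
    bellFunctional R (C a * f) = a * bellFunctional R f := by
  rw [← smul_eq_C_mul, map_smul, smul_eq_mul]

theorem bellFunctional_X_mul (f : R[X]) :
    bellFunctional R (X * f) = bellFunctional R (f.comp (X + 1)) := by
  induction f using Polynomial.induction_on' with
  | add f g hf hg => rw [mul_add, map_add, hf, hg, add_comp, map_add]
  | monomial n a =>
    rw [← C_mul_X_pow_eq_monomial, mul_left_comm, ← pow_succ', bellFunctional_C_mul,
      bellFunctional_X_pow, mul_comp, C_comp, X_pow_comp, bellFunctional_C_mul, add_pow,
      map_sum, bell_succ]
    push_cast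
    refine congrArg (a * ·) (sum_congr rfl fun i _ => ?_)
    rw [one_pow, mul_one, ← C_eq_natCast, mul_comm (X ^ i), bellFunctional_C_mul,
      bellFunctional_X_pow, mul_comm]

end BellFunctional

section CharP

variable {R : Type*} [CommRing R]

theorem bellFunctional_descPochhammer_mul (k : ℕ) (g : R[X]) :
    bellFunctional R (descPochhammer R k * g) = bellFunctional R (g.comp (X + (k : R[X]))) := by
  induction k generalizing g with
  | zero => simp
  | succ k ih =>
    rw [descPochhammer_succ_left, mul_assoc, bellFunctional_X_mul, mul_comp, comp_assoc, sub_comp,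
      X_comp, one_comp, add_sub_cancel_right, comp_X, ih, comp_assoc, add_comp, X_comp, one_comp,
      add_assoc, Nat.cast_succ, add_comm (k : R[X])]

theorem descPochhammer_eq_prod_range (n : ℕ) :
    descPochhammer R n = ∏ i ∈ range n, (X - C (i : R)) := by
  induction n with
  | zero => simp
  | succ n ih => rw [descPochhammer_succ_right, ih, prod_range_succ, map_natCast]

variable (p : ℕ) [hp : Fact p.Prime]

-- Both sides are `∏ a : ZMod p, (X - C a)`.
theorem ZMod.descPochhammer_eq_X_pow_sub_X : descPochhammer (ZMod p) p = X ^ p - X := by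
  have hroots : (X ^ p - X : (ZMod p)[X]).roots = univ.val := by
    simpa [ZMod.card] using FiniteField.roots_X_pow_card_sub_X (ZMod p)
  have hdeg : (X ^ p - X : (ZMod p)[X]).natDegree = p :=
    FiniteField.X_pow_card_sub_X_natDegree_eq (ZMod p) hp.out.one_lt
  have hmonic : (X ^ p - X : (ZMod p)[X]).Monic :=
    monic_X_pow_sub (degree_X_le.trans_lt (by exact_mod_cast hp.out.one_lt))
  rw [← prod_multiset_X_sub_C_of_monic_of_roots_card_eq hmonic (by simp [hroots, hdeg]), hroots,
    descPochhammer_eq_prod_range, ← prod_eq_multiset_prod]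
  exact prod_nbij' (fun i => (i : ZMod p)) ZMod.val (by simp) (by simp [ZMod.val_lt])
    (fun i hi => ZMod.val_cast_of_lt (mem_range.1 hi)) (by simp) (by simp)

variable [CharP R p]

theorem descPochhammer_eq_X_pow_sub_X : descPochhammer R p = X ^ p - X := by
  rw [← descPochhammer_map (ZMod.castHom (dvd_refl p) R), ZMod.descPochhammer_eq_X_pow_sub_X,
    Polynomial.map_sub, Polynomial.map_pow, map_X]

theorem bellFunctional_X_pow_sub_X_sub_one_mul (g : R[X]) :
    bellFunctional R ((X ^ p - X - 1) * g) = 0 := by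
  rw [← descPochhammer_eq_X_pow_sub_X p, sub_mul, one_mul, map_sub,
    bellFunctional_descPochhammer_mul, CharP.cast_eq_zero, add_zero, comp_X, sub_self]

theorem sub_sub_one_dvd_pow_char_pow_sub (x : R) (m : ℕ) :
    x ^ p - x - 1 ∣ x ^ p ^ m - x - m := by
  induction m with
  | zero => simp
  | succ m ih =>
    have cast_pow : (m : R) ^ p = m := by rw [← frobenius_def, map_natCast]
    have frob : (x ^ p ^ m - x - m) ^ p = x ^ p ^ (m + 1) - x ^ p - m := by
      rw [sub_pow_char, sub_pow_char, ← pow_mul, ← pow_succ, cast_pow]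
    have h := (dvd_pow ih hp.out.ne_zero).add (dvd_refl (x ^ p - x - 1))
    rw [frob] at h
    convert h using 1
    push_cast
    ring

theorem bell_char_pow_add (m n : ℕ) : (bell (p ^ m + n) : R) = m * bell n + bell (n + 1) := by
  obtain ⟨q, hq⟩ := sub_sub_one_dvd_pow_char_pow_sub p (X : R[X]) m
  have h := bellFunctional_X_pow_sub_X_sub_one_mul p (q * X ^ n : R[X])
  rw [← mul_assoc, ← hq, sub_mul, sub_mul, ← pow_add, ← pow_succ', ← C_eq_natCast, map_sub,
    map_sub, bellFunctional_C_mul, bellFunctional_X_pow, bellFunctional_X_pow,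
    bellFunctional_X_pow] at h
  linear_combination h

end CharP

/-- Touchard's congruence: `B_{p^m+n} ≡ m·B_n + B_{n+1} (mod p)`. -/
theorem bell_touchard (p : ℕ) [Fact p.Prime] (m n : ℕ) :
    (bell (p ^ m + n) : ℤ) ≡ (m : ℤ) * bell n + bell (n + 1) [ZMOD p] := by
  rw [← ZMod.intCast_eq_intCast_iff]
  push_cast
  exact bell_char_pow_add p m n
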